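/- arXiv:2403.07772 — 2 statements merged into one kernel-verified Lean document; each statement's English description precedes it below -/
import Mathlib

section
/- Posterior decomposition bound: Let π₀ be a prior probability density on a measurable parameter space Ω, and for datasets X = D ∪ {x} and Z = D ∪ {z} of size n (differing in one point), let d(x;θ) = k(x;θ)/k(x;θ*) be the likelihood ratio against a fixed θ*, m_n(A, X) = ∫_A ∏_{i=1}^n d(x_i;θ) π₀(θ) dθ, and P_{π_n}(S|X) = m_n(S,X)/m_n(Ω,X) the posterior probability. Fix a measurable A_n ⊆ Ω and set η_n = sup_{x,z} sup_{θ ∈ A_n} d(x;θ)/d(z;θ). Then for every measurable S ⊆ Ω: P_{π_n}(S|X) ≤ η_n (η_n + m_n(A_nᶜ, Z)/m_n(Ω, X)) · P_{π_n}(S|Z) + m_n(A_nᶜ, X)/m_n(Ω, X), assuming all the relevant integrals are positive and finite and η_n is finite. -/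
open MeasureTheory

/-!
On `An` every likelihood ratio is at most `η`, so there the unnormalised posterior density
of `X` is at most `η` times that of `Z` and vice versa. Splitting each mass into its parts
on `An` and on `Anᶜ` gives `m(S, X) ≤ η m(S, Z) + m(Anᶜ, X)` and
`m(Ω, Z) ≤ η m(Ω, X) + m(Anᶜ, Z)`; dividing the first by `m(Ω, X)` and using the second to
trade `m(Ω, X)` for `m(Ω, Z)` in the denominator gives the bound.
-/

/-- `m_n(A, pts) = ∫_A ∏ᵢ d(ptsᵢ; θ) π₀(dθ)` -/
noncomputable def posteriorMass {Θ 𝒳 : Type*} [MeasurableSpace Θ] (π₀ : Measure Θ)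
    {n : ℕ} (d : 𝒳 → Θ → ℝ) (A : Set Θ) (pts : Fin n → 𝒳) : ℝ :=
  ∫ θ in A, (∏ i, d (pts i) θ) ∂π₀

theorem setIntegral_le_const_mul_add_compl {α : Type*} [MeasurableSpace α] {μ : Measure α}
    {f g : α → ℝ} {A : Set α} (S : Set α) {c : ℝ} (hA : MeasurableSet A)
    (hf : Integrable f μ) (hg : Integrable g μ) (hf₀ : 0 ≤ f) (hg₀ : 0 ≤ g) (hc : 0 ≤ c)
    (hfg : ∀ x ∈ A, f x ≤ c * g x) :
    ∫ x in S, f x ∂μ ≤ c * ∫ x in S, g x ∂μ + ∫ x in Aᶜ, f x ∂μ := by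
  have h_on : ∫ x in S ∩ A, f x ∂μ ≤ c * ∫ x in S, g x ∂μ :=
    calc ∫ x in S ∩ A, f x ∂μ ≤ ∫ x in S ∩ A, c * g x ∂μ := by
          refine setIntegral_mono_ae_restrict hf.integrableOn (hg.integrableOn.const_mul c) ?_
          exact ae_restrict_of_ae_restrict_of_subset Set.inter_subset_right
            ((ae_restrict_mem hA).mono hfg)
      _ = c * ∫ x in S ∩ A, g x ∂μ := integral_const_mul c g
      _ ≤ c * ∫ x in S, g x ∂μ := mul_le_mul_of_nonneg_left
          (setIntegral_mono_set hg.integrableOn (.of_forall hg₀)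
            Set.inter_subset_left.eventuallyLE) hc
  have h_off : ∫ x in S \ A, f x ∂μ ≤ ∫ x in Aᶜ, f x ∂μ :=
    setIntegral_mono_set hf.integrableOn (.of_forall hf₀)
      (Set.sdiff_subset_compl S A).eventuallyLE
  rw [← integral_inter_add_sdiff hA hf.integrableOn]
  exact add_le_add h_on h_off

theorem prod_cons_le_mul_prod_cons {𝒳 : Type*} {n : ℕ} (D : Fin n → 𝒳) {x z : 𝒳}
    {w : 𝒳 → ℝ} {η : ℝ} (hw : ∀ y, 0 ≤ w y) (h : w x ≤ η * w z) :
    ∏ i, w ((Fin.cons x D : Fin (n + 1) → 𝒳) i) ≤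
      η * ∏ i, w ((Fin.cons z D : Fin (n + 1) → 𝒳) i) := by
  simp only [Fin.prod_univ_succ, Fin.cons_zero, Fin.cons_succ, ← mul_assoc]
  exact mul_le_mul_of_nonneg_right h (Finset.prod_nonneg fun i _ => hw _)

theorem div_le_mul_mul_div_add_div {a b c e r s η : ℝ} (hb : 0 < b) (he : 0 < e) (hc : 0 ≤ c)
    (hη : 0 ≤ η) (ha : a ≤ η * c + r) (he' : e ≤ η * b + s) :
    a / b ≤ η * (η + s / b) * (c / e) + r / b := by
  have he_div : e / b ≤ η + s / b :=
    calc e / b ≤ (η * b + s) / b := by gcongr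
      _ = η + s / b := by field_simp
  calc a / b ≤ (η * c + r) / b := by gcongr
    _ = η * (e / b) * (c / e) + r / b := by field_simp
    _ ≤ η * (η + s / b) * (c / e) + r / b := by gcongr

theorem posterior_decomposition_bound_general
    {Θ 𝒳 : Type*} [MeasurableSpace Θ] (π₀ : Measure Θ)
    (n : ℕ) (D : Fin n → 𝒳) (x z : 𝒳)
    (d : 𝒳 → Θ → ℝ) (hd_pos : ∀ y θ, 0 < d y θ)
    (An S : Set Θ) (hAn : MeasurableSet An)
    -- the two neighbouring datasets of size n+1 sharing the n common points of D
    (X Z : Fin (n + 1) → 𝒳) (hX : X = Fin.cons x D) (hZ : Z = Fin.cons z D)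
    -- the relevant integrals are finite …
    (hintX : Integrable (fun θ => ∏ i, d (X i) θ) π₀)
    (hintZ : Integrable (fun θ => ∏ i, d (Z i) θ) π₀)
    -- … and positive
    (hposX : 0 < posteriorMass π₀ d Set.univ X)
    (hposZ : 0 < posteriorMass π₀ d Set.univ Z)
    -- η is finite, i.e. the supremum defining it is over a bounded nonempty set
    (η : ℝ)
    (hη : η = sSup {r : ℝ | ∃ x' z' θ, θ ∈ An ∧ r = d x' θ / d z' θ})
    (hηbdd : BddAbove {r : ℝ | ∃ x' z' θ, θ ∈ An ∧ r = d x' θ / d z' θ}) :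
    posteriorMass π₀ d S X / posteriorMass π₀ d Set.univ X ≤
      η * (η + posteriorMass π₀ d Anᶜ Z / posteriorMass π₀ d Set.univ X) *
        (posteriorMass π₀ d S Z / posteriorMass π₀ d Set.univ Z) +
      posteriorMass π₀ d Anᶜ X / posteriorMass π₀ d Set.univ X := by
  have hη₀ : 0 ≤ η := hη ▸ Real.sSup_nonneg (by
    rintro _ ⟨x', z', θ, -, rfl⟩
    exact div_nonneg (hd_pos x' θ).le (hd_pos z' θ).le)
  have hratio : ∀ x' z', ∀ θ ∈ An, d x' θ ≤ η * d z' θ := fun x' z' θ hθ =>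
    (div_le_iff₀ (hd_pos z' θ)).mp (hη ▸ le_csSup hηbdd ⟨x', z', θ, hθ, rfl⟩)
  have hprod_nonneg (pts : Fin (n + 1) → 𝒳) : 0 ≤ fun θ => ∏ i, d (pts i) θ :=
    fun θ => Finset.prod_nonneg fun i _ => (hd_pos _ θ).le
  subst hX hZ
  have hS_split : posteriorMass π₀ d S (Fin.cons x D) ≤
      η * posteriorMass π₀ d S (Fin.cons z D) + posteriorMass π₀ d Anᶜ (Fin.cons x D) :=
    setIntegral_le_const_mul_add_compl S hAn hintX hintZ (hprod_nonneg _)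
      (hprod_nonneg _) hη₀
      fun θ hθ => prod_cons_le_mul_prod_cons D (fun y => (hd_pos y θ).le) (hratio x z θ hθ)
  have hΩ_split : posteriorMass π₀ d Set.univ (Fin.cons z D) ≤
      η * posteriorMass π₀ d Set.univ (Fin.cons x D) + posteriorMass π₀ d Anᶜ (Fin.cons z D) :=
    setIntegral_le_const_mul_add_compl Set.univ hAn hintZ hintX (hprod_nonneg _)
      (hprod_nonneg _) hη₀
      fun θ hθ => prod_cons_le_mul_prod_cons D (fun y => (hd_pos y θ).le) (hratio z x θ hθ)
  exact div_le_mul_mul_div_add_div hposX hposZ (integral_nonneg (hprod_nonneg _)) hη₀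
    hS_split hΩ_split

/-- Posterior decomposition bound (Proposition 1):
`P_{π_n}(S|X) ≤ η (η + m_n(A_nᶜ, Z)/m_n(Ω, X)) P_{π_n}(S|Z) + m_n(A_nᶜ, X)/m_n(Ω, X)`,
for neighbouring datasets `X = D ∪ {x}`, `Z = D ∪ {z}` and
`η = sup_{x,z ∈ 𝒳} sup_{θ ∈ A n} d(x;θ)/d(z;θ)`. -/
theorem posterior_decomposition_bound
    {Θ 𝒳 : Type*} [MeasurableSpace Θ] (π₀ : Measure Θ) [IsProbabilityMeasure π₀]
    (n : ℕ) (D : Fin n → 𝒳) (x z : 𝒳)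
    (d : 𝒳 → Θ → ℝ) (hd_pos : ∀ y θ, 0 < d y θ)
    (An S : Set Θ) (hAn : MeasurableSet An) (hS : MeasurableSet S)
    -- the two neighbouring datasets of size n+1 sharing the n common points of D
    (X Z : Fin (n + 1) → 𝒳) (hX : X = Fin.cons x D) (hZ : Z = Fin.cons z D)
    -- the relevant integrals are finite …
    (hintX : Integrable (fun θ => ∏ i, d (X i) θ) π₀)
    (hintZ : Integrable (fun θ => ∏ i, d (Z i) θ) π₀)
    -- … and positive
    (hposX : 0 < posteriorMass π₀ d Set.univ X)
    (hposZ : 0 < posteriorMass π₀ d Set.univ Z)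
    -- η is finite, i.e. the supremum defining it is over a bounded nonempty set
    (η : ℝ)
    (hη : η = sSup {r : ℝ | ∃ x' z' θ, θ ∈ An ∧ r = d x' θ / d z' θ})
    (hηbdd : BddAbove {r : ℝ | ∃ x' z' θ, θ ∈ An ∧ r = d x' θ / d z' θ})
    (hηne : {r : ℝ | ∃ x' z' θ, θ ∈ An ∧ r = d x' θ / d z' θ}.Nonempty) :
    posteriorMass π₀ d S X / posteriorMass π₀ d Set.univ X ≤
      η * (η + posteriorMass π₀ d Anᶜ Z / posteriorMass π₀ d Set.univ X) *
        (posteriorMass π₀ d S Z / posteriorMass π₀ d Set.univ Z) +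
      posteriorMass π₀ d Anᶜ X / posteriorMass π₀ d Set.univ X :=
  posterior_decomposition_bound_general π₀ n D x z d hd_pos An S hAn X Z hX hZ hintX hintZ hposX
    hposZ η hη hηbdd
end

section
/- Hellinger–Euclidean comparison for logistic regression: let Φ(z) = 1/(1+e^{−z}) and for θ ∈ ℝ^d, w ∈ ℝ^d define the Bernoulli likelihood f_θ(x|w) = Φ(θᵀw)^x Φ(−θᵀw)^{1−x} for x ∈ {0,1}. Then the squared Hellinger distance over x ∈ {0,1} satisfies h²(θ*, θ) := ½ ∑_{x=0}^{1} (√f_{θ*}(x|w) − √f_θ(x|w))² = (1/8)·Φ(φᵀw)Φ(−φᵀw)·((θ−θ*)ᵀw)² for some φ on the segment between θ* and θ. Consequently, if ‖θ − θ*‖₂ ≤ R and w is fixed with wᵀw > 0 and ‖w‖_∞ ≤ 1, there is a constant C > 0 (depending on R, θ*, w) with h(θ*, θ) ≥ C·|(θ−θ*)ᵀw|. -/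
/-- The standard logistic function `Φ(z) = 1/(1 + e^{−z})`. -/
noncomputable def logisticFn (z : ℝ) : ℝ := 1 / (1 + Real.exp (-z))

/-- Dot product `θᵀw` on `ℝ^d`. -/
def dotProd {d : ℕ} (a b : Fin d → ℝ) : ℝ := ∑ i, a i * b i

/-- The Bernoulli (logistic regression) likelihood
`f_θ(x|w) = Φ(θᵀw)^x Φ(−θᵀw)^{1−x}` for `x ∈ {0,1}`. -/
noncomputable def logisticLik (t : ℝ) (x : ℕ) : ℝ :=
  logisticFn t ^ x * logisticFn (-t) ^ (1 - x)

/-- Squared Hellinger distance over `x ∈ {0,1}` between the logistic likelihoods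
at `θ*` and `θ`. -/
noncomputable def logisticSqHellinger {d : ℕ} (θs θ w : Fin d → ℝ) : ℝ :=
  (1 / 2) * ∑ x ∈ Finset.range 2,
    (Real.sqrt (logisticLik (dotProd θs w) x) - Real.sqrt (logisticLik (dotProd θ w) x)) ^ 2

/-!
Only `s = θ*ᵀw` and `t = θᵀw` matter. With `α c = arctan (exp (-c/2))` one has
`√Φ(c) = cos (α c)` and `√Φ(-c) = sin (α c)`, so both likelihood vectors lie on the unit circle
and `h² = 2 sin² ((α s - α t)/2)`; moreover `α' = -r/2` where `r c = √(Φ(c) Φ(-c))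
= 1/(2 cosh (c/2))`. For `s ≤ t`, the mean value theorem and `sin x ≤ x` bound
`4 sin ((α s - α t)/2)` above by `r(c) (t - s)` for some `c ∈ [s, t]`, and a
monotonicity/concavity argument bounds it below by `r(e) (t - s)` at the endpoint `e` of larger
modulus; the intermediate value theorem for `r` gives the identity. The lower bound on `h` follows
because `r` decreases in `|c|` and `|t - s| ≤ R ‖w‖₂` by Cauchy–Schwarz.
-/

open Real Set

noncomputable def logisticAngle (c : ℝ) : ℝ := arctan (exp (-(c / 2)))

noncomputable def logisticStdDev (c : ℝ) : ℝ := (2 * cosh (c / 2))⁻¹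

lemma logisticStdDev_eq_exp_div (c : ℝ) :
    logisticStdDev c = exp (-(c / 2)) / (1 + exp (-(c / 2)) ^ 2) := by
  rw [logisticStdDev, cosh_eq, exp_neg]
  field_simp

lemma logisticFn_eq_one_div (c : ℝ) : logisticFn c = 1 / (1 + exp (-(c / 2)) ^ 2) := by
  rw [logisticFn, ← exp_nat_mul]; ring_nf

lemma logisticStdDev_sq (c : ℝ) :
    logisticStdDev c ^ 2 = logisticFn c * logisticFn (-c) := by
  rw [logisticStdDev_eq_exp_div, logisticFn_eq_one_div, logisticFn_eq_one_div, neg_div, neg_neg,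
    exp_neg]
  field_simp
  ring

lemma logisticStdDev_pos (c : ℝ) : 0 < logisticStdDev c := by
  unfold logisticStdDev; positivity

lemma logisticStdDev_neg (c : ℝ) : logisticStdDev (-c) = logisticStdDev c := by
  simp [logisticStdDev, neg_div]

lemma logisticStdDev_le_logisticStdDev {c₁ c₂ : ℝ} (h : |c₁| ≤ |c₂|) :
    logisticStdDev c₂ ≤ logisticStdDev c₁ := by
  unfold logisticStdDev
  gcongr
  rw [cosh_le_cosh, abs_div, abs_div]
  gcongr

lemma continuous_logisticStdDev : Continuous logisticStdDev :=
  Continuous.inv₀ (by fun_prop) fun c => (mul_pos two_pos (cosh_pos _)).ne'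

lemma logisticAngle_pos (c : ℝ) : 0 < logisticAngle c := arctan_pos.2 (exp_pos _)

lemma logisticAngle_lt_pi_div_two (c : ℝ) : logisticAngle c < π / 2 := arctan_lt_pi_div_two _

lemma strictAnti_logisticAngle : StrictAnti logisticAngle := fun _ _ h =>
  arctan_strictMono (exp_lt_exp.2 (by linarith))

lemma logisticAngle_zero : logisticAngle 0 = π / 4 := by simp [logisticAngle]

lemma logisticAngle_neg (c : ℝ) : logisticAngle (-c) = π / 2 - logisticAngle c := by
  rw [logisticAngle, logisticAngle, ← arctan_inv_of_pos (exp_pos _), ← exp_neg]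
  ring_nf

lemma hasDerivAt_logisticAngle (c : ℝ) :
    HasDerivAt logisticAngle (-logisticStdDev c / 2) c := by
  have h := (((hasDerivAt_id' c).div_const 2).fun_neg.exp).arctan
  exact h.congr_deriv (by rw [logisticStdDev_eq_exp_div]; ring)

lemma sin_two_mul_logisticAngle (c : ℝ) :
    sin (2 * logisticAngle c) = 2 * logisticStdDev c := by
  rw [sin_two_mul, logisticAngle, sin_arctan, cos_arctan, logisticStdDev_eq_exp_div]
  field_simp
  rw [sq_sqrt (by positivity)]

lemma cos_two_mul_logisticAngle (c : ℝ) : cos (2 * logisticAngle c) = tanh (c / 2) := by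
  rw [cos_two_mul, logisticAngle, cos_sq_arctan, tanh_eq, exp_neg]
  field_simp
  ring

lemma sqrt_logisticFn (c : ℝ) : √(logisticFn c) = cos (logisticAngle c) := by
  rw [logisticFn_eq_one_div, ← cos_sq_arctan, sqrt_sq (cos_arctan_pos _).le, logisticAngle]

lemma sqrt_logisticFn_neg (c : ℝ) : √(logisticFn (-c)) = sin (logisticAngle c) := by
  rw [sqrt_logisticFn, logisticAngle_neg, cos_pi_div_two_sub]

noncomputable def logitSqHellinger (s t : ℝ) : ℝ :=
  (1 / 2) * ∑ x ∈ Finset.range 2, (√(logisticLik s x) - √(logisticLik t x)) ^ 2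

lemma logitSqHellinger_eq (s t : ℝ) :
    logitSqHellinger s t = 2 * sin ((logisticAngle s - logisticAngle t) / 2) ^ 2 := by
  have h₀ (c : ℝ) : logisticLik c 0 = logisticFn (-c) := by simp [logisticLik]
  have h₁ (c : ℝ) : logisticLik c 1 = logisticFn c := by simp [logisticLik]
  rw [logitSqHellinger, Finset.sum_range_succ, Finset.sum_range_one, h₀, h₀, h₁, h₁,
    sqrt_logisticFn_neg, sqrt_logisticFn_neg, sqrt_logisticFn, sqrt_logisticFn, sin_sq_eq_half_sub,
    show 2 * ((logisticAngle s - logisticAngle t) / 2) = logisticAngle s - logisticAngle t by ring,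
    cos_sub]
  linear_combination (sin_sq_add_cos_sq (logisticAngle s) + sin_sq_add_cos_sq (logisticAngle t)) / 2

lemma logisticStdDev_le_mul_cos {σ t : ℝ} (hσ : 0 ≤ σ) (hσt : σ ≤ t) :
    logisticStdDev t ≤
      logisticStdDev σ * cos ((logisticAngle σ - logisticAngle t) / 2) := by
  set a := logisticAngle σ
  set b := logisticAngle t
  have hb : 0 < b := logisticAngle_pos t
  have hba : b ≤ a := strictAnti_logisticAngle.antitone hσt
  have ha : a ≤ π / 4 := logisticAngle_zero ▸ strictAnti_logisticAngle.antitone hσ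
  have hpi := pi_pos
  suffices sin (2 * b) ≤ sin (2 * a) * cos ((a - b) / 2) by
    rw [sin_two_mul_logisticAngle, sin_two_mul_logisticAngle] at this
    linarith
  calc sin (2 * b) = sin (2 * a - 2 * (a - b)) := by ring_nf
    _ = sin (2 * a) * cos (2 * (a - b)) - cos (2 * a) * sin (2 * (a - b)) := sin_sub _ _
    _ ≤ sin (2 * a) * cos (2 * (a - b)) :=
        sub_le_self _ (mul_nonneg (cos_nonneg_of_mem_Icc ⟨by linarith, by linarith⟩)
          (sin_nonneg_of_nonneg_of_le_pi (by linarith) (by linarith)))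
    _ ≤ sin (2 * a) * cos ((a - b) / 2) :=
        mul_le_mul_of_nonneg_left
          (cos_le_cos_of_nonneg_of_le_pi (by linarith) (by linarith) (by linarith))
          (sin_nonneg_of_nonneg_of_le_pi (by linarith) (by linarith))

lemma monotoneOn_logisticStdDev_mul_cos (t : ℝ) :
    MonotoneOn (fun σ => logisticStdDev σ * cos ((logisticAngle σ - logisticAngle t) / 2))
      (Icc (-t) 0) := by
  intro σ₁ hσ₁ σ₂ hσ₂ h
  have h₁ := strictAnti_logisticAngle.antitone h
  have h₂ := strictAnti_logisticAngle.antitone (show σ₂ ≤ t by linarith [hσ₁.1, hσ₂.2])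
  have := logisticAngle_lt_pi_div_two σ₁
  have := logisticAngle_pos t
  have := pi_pos
  refine mul_le_mul (logisticStdDev_le_logisticStdDev ?_)
    (cos_le_cos_of_nonneg_of_le_pi (by linarith) (by linarith) (by linarith))
    (cos_nonneg_of_mem_Icc ⟨by linarith, by linarith⟩) (logisticStdDev_pos σ₂).le
  rw [abs_of_nonpos hσ₂.2, abs_of_nonpos (h.trans hσ₂.2)]
  linarith

lemma logisticStdDev_mul_sub_neg_le {t : ℝ} (ht : 0 ≤ t) :
    logisticStdDev t * (t - -t) ≤ 4 * sin ((logisticAngle (-t) - logisticAngle t) / 2) := by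
  set x := (logisticAngle (-t) - logisticAngle t) / 2 with hx
  have hx₀ : 0 ≤ x := by
    linarith [strictAnti_logisticAngle.antitone (show -t ≤ t by linarith)]
  have hx₁ : x ≤ π := by
    linarith [logisticAngle_lt_pi_div_two (-t), logisticAngle_pos t]
  have hsinh := self_le_sinh_iff.2 (by positivity : 0 ≤ t / 2)
  calc logisticStdDev t * (t - -t) = 2 * (t / 2) / cosh (t / 2) := by
        rw [logisticStdDev]; field_simp; ring
    _ ≤ 2 * sinh (t / 2) / cosh (t / 2) := by gcongr
    _ = 2 * cos (2 * logisticAngle t) := by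
        rw [cos_two_mul_logisticAngle, tanh_eq_sinh_div_cosh]; ring
    _ = 4 * sin x * cos x := by
        have h2x : sin (2 * x) = cos (2 * logisticAngle t) := by
          rw [hx, logisticAngle_neg, ← sin_pi_div_two_sub]; ring_nf
        rw [← h2x, sin_two_mul]; ring
    _ ≤ 4 * sin x := by
        have := sin_nonneg_of_nonneg_of_le_pi hx₀ hx₁
        nlinarith [cos_le_one x]

lemma logisticStdDev_mul_sub_le {σ t : ℝ} (h₁ : -t ≤ σ) (h₂ : σ ≤ t) :
    logisticStdDev t * (t - σ) ≤ 4 * sin ((logisticAngle σ - logisticAngle t) / 2) := by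
  have ht : 0 ≤ t := by linarith
  set φ := fun σ => 4 * sin ((logisticAngle σ - logisticAngle t) / 2) - logisticStdDev t * (t - σ)
  have hφ (σ : ℝ) : HasDerivAt φ (logisticStdDev t -
      logisticStdDev σ * cos ((logisticAngle σ - logisticAngle t) / 2)) σ := by
    have := ((((hasDerivAt_logisticAngle σ).sub_const (logisticAngle t)).div_const 2).sin.const_mul
      4).sub (((hasDerivAt_id σ).const_sub t).const_mul (logisticStdDev t))
    exact this.congr_deriv (by ring)
  have hφc : Continuous φ := continuous_iff_continuousAt.2 fun σ => (hφ σ).continuousAt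
  have hanti : AntitoneOn φ (Icc 0 t) :=
    antitoneOn_of_hasDerivWithinAt_nonpos (convex_Icc 0 t) hφc.continuousOn
      (fun σ _ => (hφ σ).hasDerivWithinAt) fun σ hσ => by
        rw [interior_Icc] at hσ
        linarith [logisticStdDev_le_mul_cos hσ.1.le hσ.2.le]
  have hconc : ConcaveOn ℝ (Icc (-t) 0) φ := by
    refine AntitoneOn.concaveOn_of_deriv (convex_Icc _ _) hφc.continuousOn
      (fun σ _ => (hφ σ).differentiableAt.differentiableWithinAt) ?_
    rw [interior_Icc]
    intro σ₁ hσ₁ σ₂ hσ₂ h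
    rw [(hφ σ₁).deriv, (hφ σ₂).deriv]
    linarith [monotoneOn_logisticStdDev_mul_cos t (Ioo_subset_Icc_self hσ₁)
      (Ioo_subset_Icc_self hσ₂) h]
  have hφt : φ t = 0 := by simp [φ]
  have hφ0 : 0 ≤ φ 0 := hφt ▸ hanti ⟨le_rfl, ht⟩ ⟨ht, le_rfl⟩ ht
  have hφ_neg : 0 ≤ φ (-t) := sub_nonneg.2 (logisticStdDev_mul_sub_neg_le ht)
  -- `φ` decreases on `[0, t]` to `φ t = 0`, and on `[-t, 0]` it is concave, hence bounded
  -- below by its endpoint values.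
  suffices 0 ≤ φ σ from sub_nonneg.1 this
  rcases le_total 0 σ with hσ | hσ
  · exact hφt ▸ hanti ⟨hσ, h₂⟩ ⟨ht, le_rfl⟩ h₂
  · exact (le_min hφ_neg hφ0).trans
      (hconc.min_le_of_mem_Icc ⟨le_rfl, by linarith⟩ ⟨by linarith, le_rfl⟩ ⟨h₁, hσ⟩)

lemma exists_mem_Icc_logisticStdDev_mul_sub_le {s t : ℝ} (hst : s ≤ t) :
    ∃ e ∈ Icc s t,
      logisticStdDev e * (t - s) ≤ 4 * sin ((logisticAngle s - logisticAngle t) / 2) := by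
  rcases le_total (-t) s with h | h
  · exact ⟨t, right_mem_Icc.2 hst, logisticStdDev_mul_sub_le h hst⟩
  · refine ⟨s, left_mem_Icc.2 hst, ?_⟩
    have := logisticStdDev_mul_sub_le (σ := -t) (t := -s) (by linarith) (by linarith)
    rwa [logisticStdDev_neg, logisticAngle_neg, logisticAngle_neg, neg_sub_neg,
      sub_sub_sub_cancel_left] at this

lemma exists_mem_Icc_le_logisticStdDev_mul_sub {s t : ℝ} (hst : s ≤ t) :
    ∃ c ∈ Icc s t,
      4 * sin ((logisticAngle s - logisticAngle t) / 2) ≤ logisticStdDev c * (t - s) := by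
  rcases hst.eq_or_lt with rfl | hst
  · exact ⟨s, left_mem_Icc.2 le_rfl, by simp⟩
  obtain ⟨c, hc, hslope⟩ := exists_hasDerivAt_eq_slope logisticAngle _ hst
    (fun c _ => (hasDerivAt_logisticAngle c).continuousAt.continuousWithinAt)
    fun c _ => hasDerivAt_logisticAngle c
  refine ⟨c, Ioo_subset_Icc_self hc, ?_⟩
  have hdiff : logisticAngle s - logisticAngle t = logisticStdDev c * (t - s) / 2 := by
    rw [eq_div_iff (sub_ne_zero.2 hst.ne')] at hslope
    linarith
  have := sin_le (x := (logisticAngle s - logisticAngle t) / 2)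
    (by linarith [strictAnti_logisticAngle hst])
  linarith

lemma exists_mem_uIcc_logitSqHellinger_eq (s t : ℝ) :
    ∃ c ∈ uIcc s t, logitSqHellinger s t = logisticStdDev c ^ 2 * (t - s) ^ 2 / 8 := by
  wlog hst : s ≤ t generalizing s t
  · obtain ⟨c, hc, h⟩ := this t s (by linarith)
    refine ⟨c, uIcc_comm s t ▸ hc, ?_⟩
    rw [logitSqHellinger_eq, ← neg_sub, neg_div, sin_neg, neg_sq, ← logitSqHellinger_eq, h]
    ring
  obtain ⟨e, he, hle⟩ := exists_mem_Icc_logisticStdDev_mul_sub_le hst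
  obtain ⟨c₁, hc₁, hge⟩ := exists_mem_Icc_le_logisticStdDev_mul_sub hst
  obtain ⟨c, hc, hceq⟩ := intermediate_value_uIcc (f := fun c => logisticStdDev c * (t - s))
    (continuous_logisticStdDev.mul continuous_const).continuousOn (mem_uIcc_of_le hle hge)
  beta_reduce at hceq
  refine ⟨c, Icc_subset_uIcc (uIcc_subset_Icc he hc₁ hc), ?_⟩
  rw [logitSqHellinger_eq, ← mul_pow, hceq]
  ring

lemma logisticStdDev_mul_abs_div_le_sqrt_logitSqHellinger {s t M : ℝ} (h : |t - s| ≤ M) :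
    logisticStdDev (|s| + M) * |t - s| / √8 ≤ √(logitSqHellinger s t) := by
  obtain ⟨c, hc, heq⟩ := exists_mem_uIcc_logitSqHellinger_eq s t
  have hcs : |c| ≤ |s| + M := by
    have := abs_sub_left_of_mem_uIcc hc
    linarith [abs_sub_abs_le_abs_sub c s]
  have hr : logisticStdDev (|s| + M) ≤ logisticStdDev c :=
    logisticStdDev_le_logisticStdDev (hcs.trans (le_abs_self _))
  rw [heq, le_sqrt (div_nonneg (mul_nonneg (logisticStdDev_pos _).le (abs_nonneg _))
    (sqrt_nonneg _)), div_pow, mul_pow, sq_abs, sq_sqrt (by norm_num)]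
  gcongr
  exacts [(logisticStdDev_pos _).le, by positivity]

lemma sub_dotProd {d : ℕ} (a b c : Fin d → ℝ) :
    dotProd (fun i => a i - b i) c = dotProd a c - dotProd b c := by
  simp only [dotProd, sub_mul, Finset.sum_sub_distrib]

lemma add_mul_sub_dotProd {d : ℕ} (a b c : Fin d → ℝ) (x : ℝ) :
    dotProd (fun i => a i + x * (b i - a i)) c = dotProd a c + x * (dotProd b c - dotProd a c) := by
  simp only [dotProd, add_mul, mul_sub, sub_mul, Finset.sum_add_distrib, Finset.sum_sub_distrib,
    Finset.mul_sum, mul_assoc]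

lemma abs_dotProd_le {d : ℕ} (a b : Fin d → ℝ) :
    |dotProd a b| ≤ √(∑ i, a i ^ 2) * √(∑ i, b i ^ 2) := by
  rw [← sqrt_mul (Finset.sum_nonneg fun i _ => sq_nonneg (a i))]
  exact abs_le_sqrt (Finset.sum_mul_sq_le_sq_mul_sq _ _ _)

theorem logistic_hellinger_euclidean_comparison_general {d : ℕ}
    (θs w : Fin d → ℝ)
    (R : ℝ) :
    (∀ θ : Fin d → ℝ, ∃ a ∈ Set.Icc (0 : ℝ) 1,
      logisticSqHellinger θs θ w =
        1 / 8 * logisticFn (dotProd (fun i => θs i + a * (θ i - θs i)) w) *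
          logisticFn (-(dotProd (fun i => θs i + a * (θ i - θs i)) w)) *
          (dotProd (fun i => θ i - θs i) w) ^ 2) ∧
    ∃ C > (0 : ℝ), ∀ θ : Fin d → ℝ, Real.sqrt (∑ i, (θ i - θs i) ^ 2) ≤ R →
      C * |dotProd (fun i => θ i - θs i) w| ≤ Real.sqrt (logisticSqHellinger θs θ w) := by
  have hH (θ : Fin d → ℝ) :
      logisticSqHellinger θs θ w = logitSqHellinger (dotProd θs w) (dotProd θ w) := rfl
  constructor
  · intro θ
    obtain ⟨c, hc, heq⟩ := exists_mem_uIcc_logitSqHellinger_eq (dotProd θs w) (dotProd θ w)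
    rw [← segment_eq_uIcc, segment_eq_image'] at hc
    obtain ⟨a, ha, rfl⟩ := hc
    refine ⟨a, ha, ?_⟩
    beta_reduce at heq
    rw [hH, heq, add_mul_sub_dotProd, sub_dotProd, logisticStdDev_sq, smul_eq_mul]
    ring
  · set M := R * √(∑ i, w i ^ 2)
    refine ⟨logisticStdDev (|dotProd θs w| + M) / √8,
      div_pos (logisticStdDev_pos _) (by positivity), fun θ hθ => ?_⟩
    have hdist : |dotProd θ w - dotProd θs w| ≤ M :=
      sub_dotProd θ θs w ▸ (abs_dotProd_le _ w).trans
        (mul_le_mul_of_nonneg_right hθ (sqrt_nonneg _))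
    rw [hH, sub_dotProd, div_mul_eq_mul_div]
    exact logisticStdDev_mul_abs_div_le_sqrt_logitSqHellinger hdist

/-- Hellinger–Euclidean comparison for logistic regression: the squared Hellinger
distance equals `(1/8) Φ(φᵀw) Φ(−φᵀw) ((θ−θ*)ᵀw)²` for some `φ` on the segment
between `θ*` and `θ`; consequently, on a ball `‖θ − θ*‖₂ ≤ R` (with `wᵀw > 0`,
`‖w‖_∞ ≤ 1`) one has `h(θ*,θ) ≥ C |(θ−θ*)ᵀw|` for some `C > 0`. -/
theorem logistic_hellinger_euclidean_comparison {d : ℕ}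
    (θs w : Fin d → ℝ)
    (hw : 0 < dotProd w w) (hwinf : ∀ i, |w i| ≤ 1)
    (R : ℝ) (hR : 0 < R) :
    (∀ θ : Fin d → ℝ, ∃ a ∈ Set.Icc (0 : ℝ) 1,
      logisticSqHellinger θs θ w =
        1 / 8 * logisticFn (dotProd (fun i => θs i + a * (θ i - θs i)) w) *
          logisticFn (-(dotProd (fun i => θs i + a * (θ i - θs i)) w)) *
          (dotProd (fun i => θ i - θs i) w) ^ 2) ∧
    ∃ C > (0 : ℝ), ∀ θ : Fin d → ℝ, Real.sqrt (∑ i, (θ i - θs i) ^ 2) ≤ R →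
      C * |dotProd (fun i => θ i - θs i) w| ≤ Real.sqrt (logisticSqHellinger θs θ w) :=
  logistic_hellinger_euclidean_comparison_general θs w R
end
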